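/- arXiv:1607.00261 — 8 statements merged into one kernel-verified Lean document; each statement's English description precedes it below -/
import Mathlib

section
/- The function f : [0,1] → ℝ defined by f(x) = h(√(1 - x²)) is convex on the interval [0,1]. -/
open Matrix
open scoped ComplexOrder

noncomputable section

/-- The binary-entropy-type function `h(x) = -((1+x)/2)·log₂((1+x)/2) - ((1-x)/2)·log₂((1-x)/2)`
(with the convention `0·log₂ 0 = 0`, automatic since `Real.logb 2 0 = 0`). -/
def hFun (x : ℝ) : ℝ :=
  -(((1 + x) / 2) * Real.logb 2 ((1 + x) / 2)) - ((1 - x) / 2) * Real.logb 2 ((1 - x) / 2)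

/-- `g : [0,1] → [0,1]` is the inverse of `h` on `[0,1]`. -/
def gFun : ℝ → ℝ := Function.invFunOn hFun (Set.Icc 0 1)

/-- The (real) quadratic form `⟨v|M|v⟩`. -/
def qform {d : ℕ} (M : Matrix (Fin d) (Fin d) ℂ) (v : Fin d → ℂ) : ℝ :=
  (star v ⬝ᵥ M.mulVec v).re

/-- `v` is an orthonormal basis (family) of `ℂ^d`. -/
def IsONB {d : ℕ} (v : Fin d → Fin d → ℂ) : Prop :=
  ∀ i j, star (v i) ⬝ᵥ v j = if i = j then 1 else 0

/-- A POVM: a finite family of positive semidefinite matrices summing to the identity. -/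
def IsPOVM {d : ℕ} {ι : Type*} [Fintype ι] (M : ι → Matrix (Fin d) (Fin d) ℂ) : Prop :=
  (∀ m, (M m).PosSemidef) ∧ ∑ m, M m = 1

/-- A density matrix: positive semidefinite with trace 1. -/
def IsDensity {d : ℕ} (ρ : Matrix (Fin d) (Fin d) ℂ) : Prop :=
  ρ.PosSemidef ∧ ρ.trace = 1

/-- The noise `N(M,A) = -Σ_{m,a} p(m,a)·log₂(p(m,a)/p(m))` with `p(m,a) = (1/d)·⟨a|M_m|a⟩`
and `p(m) = (1/d)·Tr[M_m]`, for an observable `A` with orthonormal eigenbasis `v`. -/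
def noise {d : ℕ} {ι : Type*} [Fintype ι] (M : ι → Matrix (Fin d) (Fin d) ℂ)
    (v : Fin d → Fin d → ℂ) : ℝ :=
  -∑ m, ∑ a, ((1 / (d : ℝ)) * qform (M m) (v a)) *
      Real.logb 2 (((1 / (d : ℝ)) * qform (M m) (v a)) / ((1 / (d : ℝ)) * (M m).trace.re))

/-- `H(A|ρ) = -Σ_a ⟨a|ρ|a⟩·log₂⟨a|ρ|a⟩` for an observable with orthonormal eigenbasis `v`. -/
def Hobs {d : ℕ} (v : Fin d → Fin d → ℂ) (ρ : Matrix (Fin d) (Fin d) ℂ) : ℝ :=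
  -∑ a, qform ρ (v a) * Real.logb 2 (qform ρ (v a))

/-- Conditional Shannon entropy `H(X|Y) = -Σ_{x,y} p(x,y)·log₂(p(x,y)/p(y))` of a finite joint
distribution, conditioning on the second variable. -/
def condEnt {X Y : Type*} [Fintype X] [Fintype Y] (p : X → Y → ℝ) : ℝ :=
  -∑ x, ∑ y, p x y * Real.logb 2 (p x y / ∑ x', p x' y)

/-- Pauli matrix σ_x. -/
def σx : Matrix (Fin 2) (Fin 2) ℂ := !![0, 1; 1, 0]
/-- Pauli matrix σ_y. -/
def σy : Matrix (Fin 2) (Fin 2) ℂ := !![0, -Complex.I; Complex.I, 0]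
/-- Pauli matrix σ_z. -/
def σz : Matrix (Fin 2) (Fin 2) ℂ := !![1, 0; 0, -1]

/-- `v·σ = v₁σ_x + v₂σ_y + v₃σ_z` for `v ∈ ℝ³`. -/
def vecσ (v : Fin 3 → ℝ) : Matrix (Fin 2) (Fin 2) ℂ :=
  (v 0 : ℂ) • σx + (v 1 : ℂ) • σy + (v 2 : ℂ) • σz

/-- The canonical orthonormal eigenbasis of σ_z. -/
def basisZ : Fin 2 → Fin 2 → ℂ := fun i j => if i = j then 1 else 0

/-- The canonical orthonormal eigenbasis `|±x⟩` of σ_x. -/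
def basisX : Fin 2 → Fin 2 → ℂ := fun i =>
  ![((1 / Real.sqrt 2 : ℝ) : ℂ),
    if i = 0 then ((1 / Real.sqrt 2 : ℝ) : ℂ) else (-(1 / Real.sqrt 2 : ℝ) : ℂ)]

/-- Eigenvalues `+1, -1` of a (nondegenerate) Pauli observable. -/
def pmEig : Fin 2 → ℂ := fun i => if i = 0 then 1 else -1

end

/-!
Write `s = √(1 - x²)` and `L(s) = log (1 + s) - log (1 - s)`. Since `h' = -L / (2 log 2)` and
`L' = 2 / (1 - s²) = 2 / x²`, the chain rule gives `f' = x L(s) / (2 s log 2)` and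
`f'' = (L(s) - 2s) / (2 s³ log 2)` on `(0, 1)`. The power series `L(s) = 2 ∑ s^(2k+1) / (2k+1)`
has nonnegative terms for `s ≥ 0`, so `L(s) ≥ 2s` and `f'' ≥ 0`.
-/

open Real Set

lemma two_mul_le_log_one_add_sub_log_one_sub {s : ℝ} (hs₀ : 0 ≤ s) (hs₁ : s < 1) :
    2 * s ≤ log (1 + s) - log (1 - s) := by
  have hs : |s| < 1 := by rwa [abs_of_nonneg hs₀]
  simpa using le_hasSum (hasSum_log_sub_log_of_abs_lt_one hs) 0 fun k _ => by positivity

lemma hasDerivAt_log_one_add_sub_log_one_sub {y : ℝ} (hy : |y| < 1) :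
    HasDerivAt (fun y => log (1 + y) - log (1 - y)) (2 / (1 - y ^ 2)) y := by
  obtain ⟨hy₀, hy₁⟩ := abs_lt.mp hy
  have hadd : HasDerivAt (fun y => log (1 + y)) (1 / (1 + y)) y := by
    simpa using ((hasDerivAt_id y).const_add 1).log (by simp; linarith)
  have hsub : HasDerivAt (fun y => log (1 - y)) (-1 / (1 - y)) y := by
    simpa using ((hasDerivAt_id y).const_sub 1).log (by simp; linarith)
  refine (hadd.sub hsub).congr_deriv ?_
  have hp : 1 + y ≠ 0 := by linarith
  have hm : 1 - y ≠ 0 := by linarith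
  rw [show 1 - y ^ 2 = (1 + y) * (1 - y) by ring]
  field_simp
  ring

lemma hFun_eq_binEntropy (y : ℝ) : hFun y = binEntropy ((1 + y) / 2) / log 2 := by
  rw [binEntropy_eq_negMulLog_add_negMulLog_one_sub, hFun, negMulLog, negMulLog, logb, logb]
  ring_nf

lemma continuous_hFun : Continuous hFun := by
  simp only [funext hFun_eq_binEntropy]
  fun_prop

lemma hasDerivAt_hFun {y : ℝ} (hy : |y| < 1) :
    HasDerivAt hFun (-(log (1 + y) - log (1 - y)) / (2 * log 2)) y := by
  obtain ⟨hy₀, hy₁⟩ := abs_lt.mp hy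
  rw [funext hFun_eq_binEntropy]
  have h := (hasDerivAt_binEntropy (p := (1 + y) / 2) (by linarith) (by linarith)).comp y
    (((hasDerivAt_id y).const_add 1).div_const 2)
  refine (h.div_const (log 2)).congr_deriv ?_
  rw [show 1 - (1 + y) / 2 = (1 - y) / 2 by ring, log_div (by linarith) two_ne_zero,
    log_div (by linarith) two_ne_zero]
  ring

lemma hasDerivAt_sqrt_one_sub_sq {x : ℝ} (hx : x ^ 2 < 1) :
    HasDerivAt (fun x => √(1 - x ^ 2)) (-x / √(1 - x ^ 2)) x := by
  refine (((hasDerivAt_pow 2 x).const_sub 1).sqrt (by linarith)).congr_deriv ?_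
  field_simp
  ring

lemma hasDerivAt_div_sqrt_one_sub_sq {x : ℝ} (hx : x ^ 2 < 1) :
    HasDerivAt (fun x => x / √(1 - x ^ 2)) (1 / √(1 - x ^ 2) ^ 3) x := by
  have hs : 0 < √(1 - x ^ 2) := sqrt_pos.mpr (by linarith)
  have hs_sq : √(1 - x ^ 2) ^ 2 = 1 - x ^ 2 := sq_sqrt (by linarith)
  refine ((hasDerivAt_id' x).div (hasDerivAt_sqrt_one_sub_sq hx) hs.ne').congr_deriv ?_
  field_simp
  linear_combination hs_sq

lemma abs_sqrt_one_sub_sq_lt_one {x : ℝ} (hx₀ : x ≠ 0) : |√(1 - x ^ 2)| < 1 := by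
  rw [abs_of_nonneg (sqrt_nonneg _), sqrt_lt' one_pos]
  linarith [pow_pos (abs_pos.mpr hx₀) 2, sq_abs x]

lemma hasDerivAt_hFun_sqrt_one_sub_sq {x : ℝ} (hx₀ : x ≠ 0) (hx₁ : x ^ 2 < 1) :
    HasDerivAt (fun x => hFun √(1 - x ^ 2))
      (x / √(1 - x ^ 2) * (log (1 + √(1 - x ^ 2)) - log (1 - √(1 - x ^ 2))) / (2 * log 2)) x := by
  refine ((hasDerivAt_hFun (abs_sqrt_one_sub_sq_lt_one hx₀)).comp x
    (hasDerivAt_sqrt_one_sub_sq hx₁)).congr_deriv ?_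
  ring

lemma hasDerivAt_deriv_hFun_sqrt_one_sub_sq {x : ℝ} (hx₀ : x ≠ 0) (hx₁ : x ^ 2 < 1) :
    HasDerivAt
      (fun x => x / √(1 - x ^ 2) * (log (1 + √(1 - x ^ 2)) - log (1 - √(1 - x ^ 2))) / (2 * log 2))
      ((log (1 + √(1 - x ^ 2)) - log (1 - √(1 - x ^ 2)) - 2 * √(1 - x ^ 2)) /
        (√(1 - x ^ 2) ^ 3 * (2 * log 2))) x := by
  have hs : 0 < √(1 - x ^ 2) := sqrt_pos.mpr (by linarith)
  have hs_sq : √(1 - x ^ 2) ^ 2 = 1 - x ^ 2 := sq_sqrt (by linarith)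
  have hlog := (hasDerivAt_log_one_add_sub_log_one_sub (abs_sqrt_one_sub_sq_lt_one hx₀)).comp x
    (hasDerivAt_sqrt_one_sub_sq hx₁)
  refine (((hasDerivAt_div_sqrt_one_sub_sq hx₁).mul hlog).div_const (2 * log 2)).congr_deriv ?_
  rw [hs_sq, sub_sub_cancel, Function.comp_apply]
  field_simp
  ring

/-- The function `f(x) = h(√(1 - x²))` is convex on `[0,1]`. -/
theorem stmt_0 : ConvexOn ℝ (Set.Icc (0 : ℝ) 1) (fun x => hFun (Real.sqrt (1 - x ^ 2))) := by
  have mem_interior {x : ℝ} (hx : x ∈ interior (Icc (0 : ℝ) 1)) : x ≠ 0 ∧ x ^ 2 < 1 := by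
    rw [interior_Icc] at hx
    exact ⟨hx.1.ne', by nlinarith [hx.1, hx.2]⟩
  refine convexOn_of_hasDerivWithinAt2_nonneg (convex_Icc 0 1)
    (continuous_hFun.comp (by fun_prop)).continuousOn
    (fun x hx => (hasDerivAt_hFun_sqrt_one_sub_sq (mem_interior hx).1
      (mem_interior hx).2).hasDerivWithinAt)
    (fun x hx => (hasDerivAt_deriv_hFun_sqrt_one_sub_sq (mem_interior hx).1
      (mem_interior hx).2).hasDerivWithinAt)
    fun x hx => div_nonneg ?_ (by positivity)
  have hs := abs_sqrt_one_sub_sq_lt_one (mem_interior hx).1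
  rw [abs_of_nonneg (sqrt_nonneg _)] at hs
  linarith [two_mul_le_log_one_add_sub_log_one_sub (sqrt_nonneg (1 - x ^ 2)) hs]
end

section
/- Let A and B be nondegenerate observables on ℂ^d with orthonormal eigenbases (|a⟩)_a and (|b⟩)_b, and let E(A,B) = {(H(A|ρ), H(B|ρ)) : ρ a d×d density matrix} ⊆ ℝ². Then for every POVM (M_m)_m on ℂ^d, the pair (N(M,A), N(M,B)) lies in the convex hull of E(A,B). -/
open Matrix
open scoped ComplexOrder

/-! With `w_m = Tr[M_m]/d` and `ρ_m = M_m / Tr[M_m]`, the conditional distribution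
`p(a|m) = ⟨a|M_m|a⟩ / Tr[M_m]` is the `A`-distribution of the state `ρ_m`, so `N(M,A)` is the
`w`-average of `H(A|ρ_m)`, and likewise for `B`. Since `Σ_m M_m = I`, the weights `w_m` sum to one,
so `(N(M,A), N(M,B)) = Σ_m w_m (H(A|ρ_m), H(B|ρ_m))` is a convex combination of points of
`E(A,B)`. -/

theorem Finset.sum_smul_mem_convexHull_of_ne_zero {R E ι : Type*} [Field R] [LinearOrder R]
    [IsStrictOrderedRing R] [AddCommGroup E] [Module R E] {s : Set E} (t : Finset ι)
    {w : ι → R} {z : ι → E} (hw₀ : ∀ i ∈ t, 0 ≤ w i) (hw₁ : ∑ i ∈ t, w i = 1)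
    (hz : ∀ i ∈ t, w i ≠ 0 → z i ∈ s) : ∑ i ∈ t, w i • z i ∈ convexHull R s := by
  classical
  rw [← t.centerMass_eq_of_sum_1 z hw₁, ← Finset.centerMass_filter_ne_zero]
  refine Finset.centerMass_mem_convexHull _ (fun i hi => hw₀ i (Finset.mem_filter.1 hi).1) ?_
    (fun i hi => hz i (Finset.mem_filter.1 hi).1 (Finset.mem_filter.1 hi).2)
  rw [Finset.sum_filter_ne_zero, hw₁]
  exact one_pos

theorem Matrix.PosSemidef.ofReal_trace_re {n : Type*} [Fintype n] {M : Matrix n n ℂ}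
    (hM : M.PosSemidef) : ((M.trace.re : ℝ) : ℂ) = M.trace :=
  Complex.ext rfl (Complex.nonneg_iff.1 hM.trace_nonneg).2

section

variable {d : ℕ}

theorem qform_smul (c : ℝ) (M : Matrix (Fin d) (Fin d) ℂ) (v : Fin d → ℂ) :
    qform (c • M) v = c * qform M v := by
  simp [qform, Matrix.smul_mulVec]

theorem isDensity_inv_trace_re_smul {M : Matrix (Fin d) (Fin d) ℂ} (hM : M.PosSemidef)
    (h : M.trace.re ≠ 0) : IsDensity (M.trace.re⁻¹ • M) := by
  refine ⟨hM.smul (inv_nonneg.2 (Complex.nonneg_iff.1 hM.trace_nonneg).1), ?_⟩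
  rw [trace_smul]
  nth_rewrite 2 [← hM.ofReal_trace_re]
  rw [Complex.real_smul, ← Complex.ofReal_mul, inv_mul_cancel₀ h, Complex.ofReal_one]

theorem IsPOVM.sum_trace_re {ι : Type*} [Fintype ι] {M : ι → Matrix (Fin d) (Fin d) ℂ}
    (hM : IsPOVM M) : ∑ m, (M m).trace.re = d := by
  rw [← Complex.re_sum, ← trace_sum, hM.2, trace_one, Fintype.card_fin, Complex.natCast_re]

/-- When `Tr[M_m] = 0` or `d = 0`, both sides of the `m`-th term vanish, since `x / 0 = 0` and
`Real.logb 2 0 = 0`. -/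
theorem noise_eq_sum_mul_Hobs {ι : Type*} [Fintype ι] (M : ι → Matrix (Fin d) (Fin d) ℂ)
    (v : Fin d → Fin d → ℂ) :
    noise M v = ∑ m, (M m).trace.re / d * Hobs v ((M m).trace.re⁻¹ • M m) := by
  simp only [noise, Hobs, qform_smul, mul_neg, Finset.mul_sum, Finset.sum_neg_distrib]
  refine congrArg _ (Finset.sum_congr rfl fun m _ => Finset.sum_congr rfl fun a _ => ?_)
  rcases eq_or_ne (M m).trace.re 0 with ht | ht
  · simp [ht]
  rcases eq_or_ne (d : ℝ) 0 with hd | hd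
  · simp [hd]
  rw [mul_div_mul_left _ _ (one_div_ne_zero hd)]
  field_simp

end

theorem stmt_2_general {d : ℕ} (hd : 0 < d) (vA vB : Fin d → Fin d → ℂ)
    {ι : Type*} [Fintype ι] (M : ι → Matrix (Fin d) (Fin d) ℂ) (hM : IsPOVM M) :
    (noise M vA, noise M vB) ∈
      convexHull ℝ {x : ℝ × ℝ | ∃ ρ : Matrix (Fin d) (Fin d) ℂ,
        IsDensity ρ ∧ x = (Hobs vA ρ, Hobs vB ρ)} := by
  set w : ι → ℝ := fun m => (M m).trace.re / d
  set ρ : ι → Matrix (Fin d) (Fin d) ℂ := fun m => (M m).trace.re⁻¹ • M m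
  have hw_sum : ∑ m, w m = 1 := by
    rw [← Finset.sum_div, hM.sum_trace_re, div_self (Nat.cast_ne_zero.2 hd.ne')]
  have hpoint : (noise M vA, noise M vB) = ∑ m, w m • (Hobs vA (ρ m), Hobs vB (ρ m)) := by
    ext <;> simp [noise_eq_sum_mul_Hobs, Prod.fst_sum, Prod.snd_sum, w, ρ]
  rw [hpoint]
  refine Finset.sum_smul_mem_convexHull_of_ne_zero _
    (fun m _ => div_nonneg (Complex.nonneg_iff.1 (hM.1 m).trace_nonneg).1 d.cast_nonneg) hw_sum
    (fun m _ hw => ⟨ρ m, isDensity_inv_trace_re_smul (hM.1 m) ?_, rfl⟩)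
  exact fun ht => hw (by simp [w, ht])

/-- For every POVM `M` on `ℂ^d`, the pair `(N(M,A), N(M,B))` lies in the convex hull of the
entropic uncertainty region `E(A,B) = {(H(A|ρ), H(B|ρ)) : ρ density matrix}`. -/
theorem stmt_2 {d : ℕ} (hd : 0 < d) (vA vB : Fin d → Fin d → ℂ)
    (hA : IsONB vA) (hB : IsONB vB)
    {ι : Type*} [Fintype ι] (M : ι → Matrix (Fin d) (Fin d) ℂ) (hM : IsPOVM M) :
    (noise M vA, noise M vB) ∈
      convexHull ℝ {x : ℝ × ℝ | ∃ ρ : Matrix (Fin d) (Fin d) ℂ,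
        IsDensity ρ ∧ x = (Hobs vA ρ, Hobs vB ρ)} :=
  stmt_2_general hd vA vB M hM
end

section
/- Let A and B be nondegenerate observables on ℂ^d with orthonormal eigenbases (|a⟩)_a and (|b⟩)_b. Let a quantum instrument be given by Kraus operators K_{m,i} (d×d complex matrices, m in a finite outcome set, i a finite index) with Σ_{m,i} K_{m,i}† K_{m,i} = I, with induced POVM M_m = Σ_i K_{m,i}† K_{m,i}, and let correction channels be given by Kraus operators L_{m,j} with Σ_j L_{m,j}† L_{m,j} = I for each m. Define the corrected disturbance D_E(M,B) as the conditional Shannon entropy H(𝔹|𝔹') of the joint distribution p(b,b') = (1/d)·Σ_{m,i,j} |⟨b'| L_{m,j} K_{m,i} |b⟩|². Then the family M' indexed by pairs (m,b') with elements M'_{m,b'} = Σ_{i,j} K_{m,i}† L_{m,j}† |b'⟩⟨b'| L_{m,j} K_{m,i} is a POVM on ℂ^d, and it satisfies N(M',A) ≤ N(M,A) and N(M',B) ≤ D_E(M,B). -/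
open Matrix
open scoped ComplexOrder

/-! Conditioning on a coarse-graining `f W` of an outcome `W` can only increase conditional
entropy, `H(X|W) ≤ H(X|f W)`: fibrewise this is the log-sum inequality. Both inequalities are of
this form. Summing `M'_{m,b'}` over `b'` gives back `M_m`, because the projectors `|b'⟩⟨b'|`
resolve the identity and every correction channel is trace preserving; and summing the joint
distribution of `b` and `(m, b')` over `m` gives the distribution `p(b, b')` defining `D_E(M,B)`. -/

open Finset Real

theorem Real.sum_mul_log_div_le {ι : Type*} {s : Finset ι} {a b : ι → ℝ}
    (ha : ∀ i ∈ s, 0 ≤ a i) (hb : ∀ i ∈ s, 0 ≤ b i) (hab : ∀ i ∈ s, 0 < a i → 0 < b i) :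
    (∑ i ∈ s, a i) * log ((∑ i ∈ s, a i) / ∑ i ∈ s, b i) ≤ ∑ i ∈ s, a i * log (a i / b i) := by
  set A := ∑ i ∈ s, a i
  set B := ∑ i ∈ s, b i
  rcases (sum_nonneg ha).eq_or_lt with hA | hA
  · have ha0 : ∀ i ∈ s, a i = 0 := (sum_eq_zero_iff_of_nonneg ha).1 hA.symm
    rw [show A = 0 from hA.symm, zero_mul]
    exact (sum_eq_zero fun i hi => by simp [ha0 i hi]).ge
  have hB : 0 < B := by
    refine (sum_nonneg hb).lt_of_ne fun hB => hA.ne' ?_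
    have hb0 := (sum_eq_zero_iff_of_nonneg hb).1 hB.symm
    exact sum_eq_zero fun i hi => ((ha i hi).eq_or_lt.resolve_right
      fun hai => (hab i hi hai).ne' (hb0 i hi)).symm
  have hterm : ∀ i ∈ s, a i * log (A / B) - a i * log (a i / b i) ≤ A * b i / B - a i := by
    intro i hi
    rcases (ha i hi).eq_or_lt with hai | hai
    · rw [← hai]
      simp only [zero_mul, sub_zero]
      exact div_nonneg (mul_nonneg hA.le (hb i hi)) hB.le
    have hbi := hab i hi hai
    calc a i * log (A / B) - a i * log (a i / b i) = a i * log (A / B / (a i / b i)) := by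
          rw [log_div (div_pos hA hB).ne' (div_pos hai hbi).ne']; ring
      _ ≤ a i * (A / B / (a i / b i) - 1) :=
          mul_le_mul_of_nonneg_left (log_le_sub_one_of_pos (by positivity)) hai.le
      _ = A * b i / B - a i := by field_simp
  have hsum := sum_le_sum hterm
  rw [sum_sub_distrib, sum_sub_distrib, ← sum_mul, ← sum_div, ← mul_sum] at hsum
  have : A * B / B - A = 0 := by field_simp; ring
  linarith

theorem Real.sum_mul_logb_div_le {ι : Type*} {s : Finset ι} {a b : ι → ℝ} {c : ℝ} (hc : 1 < c)
    (ha : ∀ i ∈ s, 0 ≤ a i) (hb : ∀ i ∈ s, 0 ≤ b i) (hab : ∀ i ∈ s, 0 < a i → 0 < b i) :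
    (∑ i ∈ s, a i) * logb c ((∑ i ∈ s, a i) / ∑ i ∈ s, b i) ≤
      ∑ i ∈ s, a i * logb c (a i / b i) := by
  simp only [logb, ← mul_div_assoc, ← sum_div]
  exact div_le_div_of_nonneg_right (sum_mul_log_div_le ha hb hab) (log_pos hc).le

theorem condEnt_le_condEnt_map {X W Z : Type*} [Fintype X] [Fintype W] [Fintype Z]
    [DecidableEq Z] (p : X → W → ℝ) (hp : ∀ x w, 0 ≤ p x w) (f : W → Z) :
    condEnt p ≤ condEnt (fun x z => ∑ w with f w = z, p x w) := by
  unfold condEnt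
  rw [neg_le_neg_iff]
  refine sum_le_sum fun x _ => ?_
  rw [← sum_fiberwise univ f]
  refine sum_le_sum fun z _ => ?_
  rw [sum_comm]
  exact sum_mul_logb_div_le one_lt_two (fun w _ => hp x w)
    (fun w _ => sum_nonneg fun x' _ => hp x' w)
    (fun w _ h => h.trans_le (single_le_sum (fun x' _ => hp x' w) (mem_univ x)))

theorem Fintype.sum_filter_fst_eq {α β M : Type*} [Fintype α] [Fintype β] [DecidableEq α]
    [AddCommMonoid M] (f : α × β → M) (a : α) : ∑ w with w.1 = a, f w = ∑ b, f (a, b) := by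
  simp only [sum_filter, Fintype.sum_prod_type]
  rw [sum_comm]
  simp

theorem Fintype.sum_filter_snd_eq {α β M : Type*} [Fintype α] [Fintype β] [DecidableEq β]
    [AddCommMonoid M] (f : α × β → M) (b : β) : ∑ w with w.2 = b, f w = ∑ a, f (a, b) := by
  simp [sum_filter, Fintype.sum_prod_type]

namespace IsONB

variable {d : ℕ} {v : Fin d → Fin d → ℂ}

theorem sum_vecMulVec_eq_one (hv : IsONB v) : ∑ a, vecMulVec (v a) (star (v a)) = 1 := by
  have hrows : of v * (of v)ᴴ = 1 := by
    ext a b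
    simpa [mul_apply, dotProduct, one_apply, mul_comm, eq_comm] using hv b a
  have hcols := mul_eq_one_comm.mp hrows
  ext j k
  simpa [mul_apply, Matrix.sum_apply, vecMulVec_apply, one_apply, mul_comm, eq_comm] using
    congrFun (congrFun hcols k) j

theorem sum_qform_eq_trace_re (hv : IsONB v) (M : Matrix (Fin d) (Fin d) ℂ) :
    ∑ a, qform M (v a) = M.trace.re := by
  have hdot : ∀ a, star (v a) ⬝ᵥ M *ᵥ v a = trace (M * vecMulVec (v a) (star (v a))) := by
    intro a
    rw [mul_vecMulVec, trace_vecMulVec, dotProduct_comm]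
  simp only [qform, ← Complex.re_sum, hdot, ← trace_sum, ← mul_sum,
    hv.sum_vecMulVec_eq_one, mul_one]

theorem sum_conjTranspose_mul_vecMulVec_mul {n : Type*} (hv : IsONB v)
    (W : Matrix (Fin d) n ℂ) : ∑ a, Wᴴ * vecMulVec (v a) (star (v a)) * W = Wᴴ * W := by
  rw [← Matrix.sum_mul, ← Matrix.mul_sum, hv.sum_vecMulVec_eq_one, Matrix.mul_one]

end IsONB

theorem Matrix.sum_conjTranspose_mul_mul_of_sum_eq_one {l m n κ R : Type*} [Fintype l]
    [Fintype m] [Fintype κ] [DecidableEq m] [Semiring R] [StarRing R] {L : κ → Matrix l m R}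
    (hL : ∑ j, (L j)ᴴ * L j = 1) (K : Matrix m n R) :
    ∑ j, (L j * K)ᴴ * (L j * K) = Kᴴ * K := by
  calc ∑ j, (L j * K)ᴴ * (L j * K) = Kᴴ * (∑ j, (L j)ᴴ * L j) * K := by
        simp only [conjTranspose_mul, Matrix.mul_sum, Matrix.sum_mul, Matrix.mul_assoc]
    _ = Kᴴ * K := by rw [hL, Matrix.mul_one]

section Qform

variable {d : ℕ}

theorem qform_sum {ι : Type*} (s : Finset ι) (M : ι → Matrix (Fin d) (Fin d) ℂ)
    (v : Fin d → ℂ) :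
    qform (∑ i ∈ s, M i) v = ∑ i ∈ s, qform (M i) v := by
  simp only [qform, Matrix.sum_mulVec, dotProduct_sum, Complex.re_sum]

theorem qform_conjTranspose_mul_vecMulVec_mul (W : Matrix (Fin d) (Fin d) ℂ) (c u : Fin d → ℂ) :
    qform (Wᴴ * vecMulVec c (star c) * W) u = ‖star c ⬝ᵥ W *ᵥ u‖ ^ 2 := by
  rw [qform, Matrix.mul_assoc, ← mulVec_mulVec, ← mulVec_mulVec, dotProduct_mulVec,
    ← star_mulVec, vecMulVec_mulVec, op_smul_eq_smul, dotProduct_smul, smul_eq_mul,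
    star_dotProduct (W *ᵥ u), Complex.star_def, RCLike.mul_conj]
  norm_cast

end Qform

section Noise

variable {d : ℕ} {ι : Type*} [Fintype ι] {v : Fin d → Fin d → ℂ}

theorem noise_eq_condEnt (M : ι → Matrix (Fin d) (Fin d) ℂ) (hv : IsONB v) :
    noise M v = condEnt (fun a m => 1 / (d : ℝ) * qform (M m) (v a)) := by
  simp only [noise, condEnt, ← mul_sum, hv.sum_qform_eq_trace_re]
  rw [sum_comm]

theorem noise_le_noise_of_eq_sum_fiberwise {ι' : Type*} [Fintype ι'] [DecidableEq ι]
    {M : ι → Matrix (Fin d) (Fin d) ℂ} {M' : ι' → Matrix (Fin d) (Fin d) ℂ} (f : ι' → ι)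
    (hM' : ∀ w, (M' w).PosSemidef) (hM : ∀ m, M m = ∑ w with f w = m, M' w) (hv : IsONB v) :
    noise M' v ≤ noise M v := by
  rw [noise_eq_condEnt M' hv, noise_eq_condEnt M hv]
  calc condEnt (fun a w => 1 / (d : ℝ) * qform (M' w) (v a))
      ≤ condEnt (fun a m => ∑ w with f w = m, 1 / (d : ℝ) * qform (M' w) (v a)) :=
        condEnt_le_condEnt_map _
          (fun a w => mul_nonneg (by positivity) ((hM' w).re_dotProduct_nonneg (v a))) f
    _ = condEnt (fun a m => 1 / (d : ℝ) * qform (M m) (v a)) := by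
        simp only [hM, qform_sum, mul_sum]

end Noise

theorem stmt_4_general {d : ℕ} (vA vB : Fin d → Fin d → ℂ)
    (hA : IsONB vA) (hB : IsONB vB)
    {ι κ κ' : Type*} [Fintype ι] [Fintype κ] [Fintype κ']
    (K : ι → κ → Matrix (Fin d) (Fin d) ℂ)
    (hK : ∑ m, ∑ i, (K m i)ᴴ * K m i = 1)
    (L : ι → κ' → Matrix (Fin d) (Fin d) ℂ)
    (hL : ∀ m, ∑ j, (L m j)ᴴ * L m j = 1)
    (M : ι → Matrix (Fin d) (Fin d) ℂ)
    (hMdef : ∀ m, M m = ∑ i, (K m i)ᴴ * K m i)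
    (M' : ι × Fin d → Matrix (Fin d) (Fin d) ℂ)
    (hM'def : ∀ m b', M' (m, b') = ∑ i, ∑ j,
        (K m i)ᴴ * (L m j)ᴴ * vecMulVec (vB b') (star (vB b')) * (L m j * K m i)) :
    IsPOVM M' ∧
    noise M' vA ≤ noise M vA ∧
    noise M' vB ≤ condEnt (fun b b' : Fin d =>
      (1 / (d : ℝ)) * ∑ m, ∑ i, ∑ j,
        ‖star (vB b') ⬝ᵥ ((L m j * K m i).mulVec (vB b))‖ ^ 2) := by
  -- a named instance rather than `classical`, so that the fibre sums over `Prod.fst` match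
  -- the instance in `Fintype.sum_filter_fst_eq`
  let _ : DecidableEq ι := Classical.decEq ι
  have hM' : ∀ m b', M' (m, b') = ∑ i, ∑ j,
      (L m j * K m i)ᴴ * vecMulVec (vB b') (star (vB b')) * (L m j * K m i) := by
    simpa only [conjTranspose_mul] using hM'def
  have hpsd : ∀ w, (M' w).PosSemidef := fun ⟨m, b'⟩ => by
    rw [hM']
    exact posSemidef_sum _ fun i _ => posSemidef_sum _ fun j _ =>
      (posSemidef_vecMulVec_self_star _).conjTranspose_mul_mul_same _
  have hfst : ∀ m, M m = ∑ w with w.1 = m, M' w := fun m => by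
    rw [Fintype.sum_filter_fst_eq, hMdef]
    simp only [hM']
    rw [sum_comm]
    refine sum_congr rfl fun i _ => ?_
    rw [sum_comm, ← sum_conjTranspose_mul_mul_of_sum_eq_one (hL m) (K m i)]
    exact sum_congr rfl fun j _ => (hB.sum_conjTranspose_mul_vecMulVec_mul _).symm
  refine ⟨⟨hpsd, ?_⟩, noise_le_noise_of_eq_sum_fiberwise Prod.fst hpsd hfst hA, ?_⟩
  · rw [← sum_fiberwise univ Prod.fst, ← hK]
    simp only [← hfst, hMdef]
  · calc noise M' vB
        ≤ condEnt (fun b b' => ∑ w with w.2 = b', 1 / (d : ℝ) * qform (M' w) (vB b)) := by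
          rw [noise_eq_condEnt M' hB]
          exact condEnt_le_condEnt_map _
            (fun b w => mul_nonneg (by positivity) ((hpsd w).re_dotProduct_nonneg (vB b))) Prod.snd
      _ = _ := by
          simp only [Fintype.sum_filter_snd_eq, ← mul_sum, hM', qform_sum,
            qform_conjTranspose_mul_vecMulVec_mul]

/-- Given an instrument with Kraus operators `K_{m,i}`, correction channels with Kraus
operators `L_{m,j}`, induced POVM `M_m = Σ_i K_{m,i}† K_{m,i}` and corrected disturbance
`D_E(M,B) = H(𝔹|𝔹')` of `p(b,b') = (1/d)·Σ_{m,i,j} |⟨b'|L_{m,j}K_{m,i}|b⟩|²`, the family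
`M'_{m,b'} = Σ_{i,j} K_{m,i}† L_{m,j}† |b'⟩⟨b'| L_{m,j} K_{m,i}` is a POVM with
`N(M',A) ≤ N(M,A)` and `N(M',B) ≤ D_E(M,B)`. -/
theorem stmt_4 {d : ℕ} (hd : 0 < d) (vA vB : Fin d → Fin d → ℂ)
    (hA : IsONB vA) (hB : IsONB vB)
    {ι κ κ' : Type*} [Fintype ι] [Fintype κ] [Fintype κ']
    (K : ι → κ → Matrix (Fin d) (Fin d) ℂ)
    (hK : ∑ m, ∑ i, (K m i)ᴴ * K m i = 1)
    (L : ι → κ' → Matrix (Fin d) (Fin d) ℂ)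
    (hL : ∀ m, ∑ j, (L m j)ᴴ * L m j = 1)
    (M : ι → Matrix (Fin d) (Fin d) ℂ)
    (hMdef : ∀ m, M m = ∑ i, (K m i)ᴴ * K m i)
    (M' : ι × Fin d → Matrix (Fin d) (Fin d) ℂ)
    (hM'def : ∀ m b', M' (m, b') = ∑ i, ∑ j,
        (K m i)ᴴ * (L m j)ᴴ * vecMulVec (vB b') (star (vB b')) * (L m j * K m i)) :
    IsPOVM M' ∧
    noise M' vA ≤ noise M vA ∧
    noise M' vB ≤ condEnt (fun b b' : Fin d =>
      (1 / (d : ℝ)) * ∑ m, ∑ i, ∑ j,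
        ‖star (vB b') ⬝ᵥ ((L m j * K m i).mulVec (vB b))‖ ^ 2) :=
  stmt_4_general vA vB hA hB K hK L hL M hMdef M' hM'def
end

section
/- For every POVM (M_m)_m on ℂ², the noises with respect to the Pauli observables σ_z and σ_x satisfy N(M,σ_z) + N(M,σ_x) ≥ 1. -/
open Matrix
open scoped ComplexOrder

/-! For an outcome with effect `N` and `t = tr N > 0`, the two noise contributions are
`t / (2 log 2)` times the binary entropies (in nats) of `p = ⟨0|N|0⟩ / t` and `q = ⟨+|N|+⟩ / t`.
Positivity of `N` puts the Bloch vector `(2p - 1, 2q - 1)` in the unit disc, and the bound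
`H(p) ≥ 4 p (1 - p)` on the binary entropy in bits turns this into `H(p) + H(q) ≥ 1`.
That bound holds because `H(p) - 4 p (1 - p)` vanishes at `0` and `1/2`, is concave up to the
inflection point `p₀` and convex and symmetric on `[p₀, 1 - p₀]`. Summing over outcomes with
weights `t / 2`, which add up to `tr I / 2 = 1`, gives the theorem. -/

open Real Set

lemma exists_mul_one_sub_eq {c : ℝ} (hc₀ : 0 < c) (hc : c ≤ 1 / 4) :
    ∃ p, 0 < p ∧ p ≤ 1 / 2 ∧ p * (1 - p) = c := by
  have hs : √(1 - 4 * c) ^ 2 = 1 - 4 * c := sq_sqrt (by linarith)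
  have hlt : √(1 - 4 * c) < 1 := by
    rw [sqrt_lt' one_pos]
    linarith
  refine ⟨(1 - √(1 - 4 * c)) / 2, by linarith, by linarith [sqrt_nonneg (1 - 4 * c)], ?_⟩
  linear_combination -hs / 4

noncomputable def binEntropyGap (p : ℝ) : ℝ :=
  binEntropy p - 4 * log 2 * (p * (1 - p))

lemma binEntropyGap_one_sub (p : ℝ) : binEntropyGap (1 - p) = binEntropyGap p := by
  simp only [binEntropyGap, binEntropy_one_sub]
  ring

lemma binEntropyGap_zero : binEntropyGap 0 = 0 := by
  simp [binEntropyGap]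

lemma binEntropyGap_two_inv : binEntropyGap 2⁻¹ = 0 := by
  rw [binEntropyGap, binEntropy_two_inv]
  ring

lemma hasDerivAt_binEntropyGap {p : ℝ} (hp₀ : p ≠ 0) (hp₁ : p ≠ 1) :
    HasDerivAt binEntropyGap (log (1 - p) - log p - 4 * log 2 * (1 - 2 * p)) p := by
  have hq : HasDerivAt (fun x : ℝ => x * (1 - x)) (1 - 2 * p) p :=
    ((hasDerivAt_id' p).mul ((hasDerivAt_id' p).const_sub 1)).congr_deriv (by ring)
  exact (hasDerivAt_binEntropy hp₀ hp₁).sub (hq.const_mul _)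

lemma hasDerivAt_deriv_binEntropyGap {p : ℝ} (hp₀ : p ≠ 0) (hp₁ : p ≠ 1) :
    HasDerivAt (fun x => log (1 - x) - log x - 4 * log 2 * (1 - 2 * x))
      (8 * log 2 - (p * (1 - p))⁻¹) p := by
  have h₁ : 1 - p ≠ 0 := sub_ne_zero.2 hp₁.symm
  have hlog : HasDerivAt (fun x => log (1 - x)) (-1 / (1 - p)) p :=
    ((hasDerivAt_id' p).const_sub 1).log h₁
  have hlin : HasDerivAt (fun x : ℝ => 4 * log 2 * (1 - 2 * x)) (4 * log 2 * -(2 * 1)) p :=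
    (((hasDerivAt_id' p).const_mul 2).const_sub 1).const_mul _
  refine ((hlog.sub (hasDerivAt_log hp₀)).sub hlin).congr_deriv ?_
  field_simp
  ring

lemma continuous_binEntropyGap : Continuous binEntropyGap := by
  unfold binEntropyGap
  fun_prop

lemma convexOn_binEntropyGap {p₀ : ℝ} (hp₀ : 0 < p₀) (hc : p₀ * (1 - p₀) = (8 * log 2)⁻¹) :
    ConvexOn ℝ (Icc p₀ (1 - p₀)) binEntropyGap := by
  have hI : ∀ x ∈ interior (Icc p₀ (1 - p₀)), x ≠ 0 ∧ x ≠ 1 ∧ p₀ * (1 - p₀) < x * (1 - x) := by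
    rw [interior_Icc]
    rintro x ⟨hx₀, hx₁⟩
    refine ⟨by linarith, by linarith, by nlinarith⟩
  refine convexOn_of_hasDerivWithinAt2_nonneg (convex_Icc _ _)
    continuous_binEntropyGap.continuousOn
    (fun x hx => (hasDerivAt_binEntropyGap (hI x hx).1 (hI x hx).2.1).hasDerivWithinAt)
    (fun x hx => (hasDerivAt_deriv_binEntropyGap (hI x hx).1 (hI x hx).2.1).hasDerivWithinAt)
    fun x hx => ?_
  rw [sub_nonneg, ← inv_inv (8 * log 2), ← hc]
  exact inv_anti₀ (by rw [hc]; positivity) (hI x hx).2.2.le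

lemma concaveOn_binEntropyGap {p₀ : ℝ} (hp₀ : p₀ ≤ 1 / 2) (hc : p₀ * (1 - p₀) = (8 * log 2)⁻¹) :
    ConcaveOn ℝ (Icc 0 p₀) binEntropyGap := by
  have hI : ∀ x ∈ interior (Icc 0 p₀), x ≠ 0 ∧ x ≠ 1 ∧ 0 < x * (1 - x) ∧
      x * (1 - x) < p₀ * (1 - p₀) := by
    rw [interior_Icc]
    rintro x ⟨hx₀, hx₁⟩
    refine ⟨by linarith, by linarith, by nlinarith, by nlinarith⟩
  refine concaveOn_of_hasDerivWithinAt2_nonpos (convex_Icc _ _)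
    continuous_binEntropyGap.continuousOn
    (fun x hx => (hasDerivAt_binEntropyGap (hI x hx).1 (hI x hx).2.1).hasDerivWithinAt)
    (fun x hx => (hasDerivAt_deriv_binEntropyGap (hI x hx).1 (hI x hx).2.1).hasDerivWithinAt)
    fun x hx => ?_
  rw [sub_nonpos, ← inv_inv (8 * log 2), ← hc]
  exact inv_anti₀ (hI x hx).2.2.1 (hI x hx).2.2.2.le

lemma four_log_two_mul_le_binEntropy {p : ℝ} (hp₀ : 0 ≤ p) (hp₁ : p ≤ 1) :
    4 * log 2 * (p * (1 - p)) ≤ binEntropy p := by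
  rw [← sub_nonneg]
  change 0 ≤ binEntropyGap p
  wlog hp : p ≤ 1 / 2 generalizing p
  · rw [← binEntropyGap_one_sub]
    exact this (by linarith) (by linarith) (by linarith)
  obtain ⟨p₀, hp₀pos, hp₀half, hc⟩ := exists_mul_one_sub_eq (c := (8 * log 2)⁻¹) (by positivity)
    (by rw [inv_le_comm₀ (by positivity) (by norm_num)]; linarith [log_two_gt_d9])
  -- convexity at the midpoint `1 / 2` of `q` and `1 - q`, where the symmetric gap vanishes
  have hmid : ∀ q ∈ Icc p₀ (1 - p₀), 0 ≤ binEntropyGap q := by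
    intro q hq
    have hq' : 1 - q ∈ Icc p₀ (1 - p₀) := ⟨by linarith [hq.2], by linarith [hq.1]⟩
    have h := (convexOn_binEntropyGap hp₀pos hc).2 hq hq'
      (by norm_num : (0 : ℝ) ≤ 1 / 2) (by norm_num : (0 : ℝ) ≤ 1 / 2) (by norm_num)
    simp only [smul_eq_mul] at h
    rw [show 1 / 2 * q + 1 / 2 * (1 - q) = 2⁻¹ by ring, binEntropyGap_two_inv,
      binEntropyGap_one_sub] at h
    linarith
  rcases le_total p p₀ with h | h
  · have h' := (concaveOn_binEntropyGap hp₀half hc).min_le_of_mem_Icc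
      (left_mem_Icc.2 hp₀pos.le) (right_mem_Icc.2 hp₀pos.le) ⟨hp₀, h⟩
    rw [binEntropyGap_zero] at h'
    exact (le_min le_rfl (hmid p₀ ⟨le_rfl, by linarith⟩)).trans h'
  · exact hmid p ⟨h, by linarith⟩

lemma log_two_le_binEntropy_add_binEntropy {p q : ℝ}
    (h : (2 * p - 1) ^ 2 + (2 * q - 1) ^ 2 ≤ 1) : log 2 ≤ binEntropy p + binEntropy q := by
  have hp := four_log_two_mul_le_binEntropy (p := p) (by nlinarith) (by nlinarith)
  have hq := four_log_two_mul_le_binEntropy (p := q) (by nlinarith) (by nlinarith)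
  nlinarith [mul_le_mul_of_nonneg_left h (log_pos one_lt_two).le]

lemma mul_binEntropy_div {u w t : ℝ} (h : u + w = t) :
    t * binEntropy (u / t) = -(u * log (u / t) + w * log (w / t)) := by
  rcases eq_or_ne t 0 with rfl | ht
  · simp
  have hw : 1 - u / t = w / t := by
    field_simp
    linarith
  rw [binEntropy, hw, log_inv, log_inv]
  field_simp
  ring

lemma noise_fin_two {ι : Type*} [Fintype ι] (M : ι → Matrix (Fin 2) (Fin 2) ℂ)
    (v : Fin 2 → Fin 2 → ℂ) (hv : ∀ m, qform (M m) (v 0) + qform (M m) (v 1) = (M m).trace.re) :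
    noise M v = ∑ m, (M m).trace.re * binEntropy (qform (M m) (v 0) / (M m).trace.re) /
      (2 * log 2) := by
  rw [noise, ← Finset.sum_neg_distrib]
  refine Finset.sum_congr rfl fun m _ => ?_
  have h2 : (1 / ((2 : ℕ) : ℝ)) ≠ 0 := by norm_num
  rw [Fin.sum_univ_two, mul_div_mul_left _ _ h2, mul_div_mul_left _ _ h2,
    mul_binEntropy_div (hv m)]
  simp only [logb]
  push_cast
  ring

section Qubit

variable (N : Matrix (Fin 2) (Fin 2) ℂ)

lemma qform_basisZ_zero : qform N (basisZ 0) = (N 0 0).re := by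
  simp [qform, basisZ, dotProduct, mulVec]

lemma qform_basisZ_add : qform N (basisZ 0) + qform N (basisZ 1) = N.trace.re := by
  simp [qform, basisZ, dotProduct, mulVec, trace_fin_two]

lemma qform_basisX_zero :
    qform N (basisX 0) = ((N 0 0).re + (N 1 1).re + ((N 0 1).re + (N 1 0).re)) / 2 := by
  simp only [qform, dotProduct, basisX, one_div, Complex.ofReal_inv, Fin.isValue, ↓reduceIte,
    Pi.star_apply, RCLike.star_def, mulVec, Fin.sum_univ_two, cons_val_zero, cons_val_one,
    cons_val_fin_one, map_inv₀, Complex.conj_ofReal, Complex.add_re, Complex.mul_re,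
    Complex.inv_re, Complex.ofReal_re, Complex.normSq_ofReal, Nat.ofNat_nonneg, mul_self_sqrt,
    Complex.inv_im, Complex.ofReal_im, neg_zero, zero_div, mul_zero, sub_zero, Complex.add_im,
    Complex.mul_im, zero_add, zero_mul]
  linear_combination ((N 0 0).re + (N 1 1).re + (N 0 1).re + (N 1 0).re) / 4 *
    mul_self_sqrt zero_le_two

lemma qform_basisX_add : qform N (basisX 0) + qform N (basisX 1) = N.trace.re := by
  simp only [qform, dotProduct, basisX, one_div, Complex.ofReal_inv, Fin.isValue, ↓reduceIte,
    Pi.star_apply, RCLike.star_def, mulVec, Fin.sum_univ_two, cons_val_zero, cons_val_one,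
    cons_val_fin_one, map_inv₀, Complex.conj_ofReal, Complex.add_re, Complex.mul_re,
    Complex.inv_re, Complex.ofReal_re, Complex.normSq_ofReal, Nat.ofNat_nonneg, mul_self_sqrt,
    Complex.inv_im, Complex.ofReal_im, neg_zero, zero_div, mul_zero, sub_zero, Complex.add_im,
    Complex.mul_im, zero_add, zero_mul, one_ne_zero, mul_neg, map_neg,
    neg_mul, Complex.neg_re, Complex.neg_im, trace_fin_two]
  linear_combination ((N 0 0).re + (N 1 1).re) / 2 * mul_self_sqrt zero_le_two

variable {N}

lemma Matrix.PosSemidef.sq_re_add_le (hN : N.PosSemidef) :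
    ((N 0 1).re + (N 1 0).re) ^ 2 ≤ 4 * (N 0 0).re * (N 1 1).re := by
  have hdet := (Complex.le_def.1 hN.det_nonneg).1
  have h10 : N 1 0 = star (N 0 1) := (hN.1.apply 1 0).symm
  have h00 := congrArg Complex.im (hN.1.apply 0 0)
  have h11 := congrArg Complex.im (hN.1.apply 1 1)
  rw [det_fin_two, h10] at hdet
  rw [h10]
  simp only [Complex.zero_re, RCLike.star_def, Complex.sub_re, Complex.mul_re, Complex.conj_re,
    Complex.conj_im, mul_neg, sub_neg_eq_add, sub_nonneg] at hdet h00 h11 ⊢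
  have h00' : (N 0 0).im = 0 := by linarith
  rw [h00', zero_mul, sub_zero] at hdet
  nlinarith [sq_nonneg (N 0 1).im]

lemma Matrix.PosSemidef.trace_re_mul_log_two_le (hN : N.PosSemidef) :
    N.trace.re * log 2 ≤ N.trace.re * (binEntropy (qform N (basisZ 0) / N.trace.re) +
      binEntropy (qform N (basisX 0) / N.trace.re)) := by
  have ha : 0 ≤ (N 0 0).re := by simpa using (Complex.le_def.1 (hN.diag_nonneg (i := 0))).1
  have hc : 0 ≤ (N 1 1).re := by simpa using (Complex.le_def.1 (hN.diag_nonneg (i := 1))).1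
  have hb := hN.sq_re_add_le
  rw [qform_basisZ_zero, qform_basisX_zero, trace_fin_two, Complex.add_re]
  set a := (N 0 0).re
  set c := (N 1 1).re
  set b := (N 0 1).re + (N 1 0).re
  rcases (add_nonneg ha hc).eq_or_lt with ht | ht
  · simp [← ht]
  refine mul_le_mul_of_nonneg_left (log_two_le_binEntropy_add_binEntropy ?_) ht.le
  -- the Bloch vector of `N / tr N` has length at most `1`
  have hbloch : (2 * (a / (a + c)) - 1) ^ 2 + (2 * ((a + c + b) / 2 / (a + c)) - 1) ^ 2 =
      ((a - c) ^ 2 + b ^ 2) / (a + c) ^ 2 := by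
    field_simp
    ring
  rw [hbloch, div_le_one (by positivity)]
  nlinarith

end Qubit

/-- For every POVM on `ℂ²`, `N(M,σ_z) + N(M,σ_x) ≥ 1`. -/
theorem stmt_8 {ι : Type*} [Fintype ι] (M : ι → Matrix (Fin 2) (Fin 2) ℂ)
    (hM : IsPOVM M) :
    1 ≤ noise M basisZ + noise M basisX := by
  obtain ⟨hpsd, hsum⟩ := hM
  have htrace : ∑ m, (M m).trace.re = 2 := by
    rw [← Complex.re_sum, ← trace_sum, hsum, trace_one]
    simp
  rw [noise_fin_two M basisZ fun m => qform_basisZ_add (M m),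
    noise_fin_two M basisX fun m => qform_basisX_add (M m), ← Finset.sum_add_distrib]
  calc (1 : ℝ) = ∑ m, (M m).trace.re * log 2 / (2 * log 2) := by
        rw [← Finset.sum_div, ← Finset.sum_mul, htrace]
        field_simp
    _ ≤ _ := Finset.sum_le_sum fun m _ => by
        rw [← add_div, ← mul_add]
        exact div_le_div_of_nonneg_right (hpsd m).trace_re_mul_log_two_le (by positivity)
end

section
/- Let (M_m)_m be a POVM on ℂ² whose elements are written M_m = p_m·(I + k_m·(n_m·σ)) with p_m ≥ 0, k_m ∈ [−1,1], and n_m ∈ ℝ³ unit vectors (so that Σ_m p_m = 1 and Σ_m p_m k_m n_m = 0). Then the noise with respect to the Pauli observable σ_z equals N(M,σ_z) = Σ_m p_m·h(|k_m·(n_m·ẑ)|), where ẑ = (0,0,1). -/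
open Matrix
open scoped ComplexOrder

noncomputable section

lemma qform_Z0 (pm km : ℝ) (nv : Fin 3 → ℝ) :
    qform ((pm:ℂ) • (1 + (km:ℂ) • vecσ nv)) (basisZ 0) = pm * (1 + km * nv 2) := by
  simp [qform, vecσ, σx, σy, σz, basisZ, Matrix.mulVec, dotProduct, Fin.sum_univ_two,
    Matrix.one_apply, Matrix.add_apply, Matrix.smul_apply]

lemma qform_Z1 (pm km : ℝ) (nv : Fin 3 → ℝ) :
    qform ((pm:ℂ) • (1 + (km:ℂ) • vecσ nv)) (basisZ 1) = pm * (1 - km * nv 2) := by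
  simp [qform, vecσ, σx, σy, σz, basisZ, Matrix.mulVec, dotProduct, Fin.sum_univ_two,
    Matrix.one_apply, Matrix.add_apply, Matrix.smul_apply]
  exact Or.inl (by ring)

lemma trace_re_M (pm km : ℝ) (nv : Fin 3 → ℝ) :
    ((pm:ℂ) • (1 + (km:ℂ) • vecσ nv)).trace.re = 2 * pm := by
  simp [Matrix.trace, vecσ, σx, σy, σz, Fin.sum_univ_two, Matrix.one_apply, Matrix.add_apply,
    Matrix.smul_apply, Matrix.diag]
  ring

lemma hFun_abs (x : ℝ) : hFun |x| = hFun x := by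
  rcases abs_cases x with ⟨h, _⟩ | ⟨h, _⟩
  · rw [h]
  · rw [h]; unfold hFun; ring_nf

lemma perM (pm x : ℝ) (hpm : 0 ≤ pm) :
    -(((1/2 * (pm * (1 + x))) * Real.logb 2 ((1/2 * (pm * (1 + x))) / (1/2 * (2 * pm))))
      + (1/2 * (pm * (1 - x))) * Real.logb 2 ((1/2 * (pm * (1 - x))) / (1/2 * (2 * pm))))
    = pm * hFun x := by
  rcases eq_or_lt_of_le hpm with h | h
  · simp [← h]
  · have hne : pm ≠ 0 := ne_of_gt h
    have e1 : (1/2 * (pm * (1 + x))) / (1/2 * (2 * pm)) = (1 + x) / 2 := by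
      field_simp
    have e2 : (1/2 * (pm * (1 - x))) / (1/2 * (2 * pm)) = (1 - x) / 2 := by
      field_simp
    rw [e1, e2]; unfold hFun; ring

end

/-- For a POVM with elements `M_m = p_m·(I + k_m·(n_m·σ))`, the noise with respect to `σ_z`
equals `Σ_m p_m·h(|k_m·(n_m·ẑ)|)` with `ẑ = (0,0,1)`. -/

theorem stmt_11 {ι : Type*} [Fintype ι] (p k : ι → ℝ) (n : ι → Fin 3 → ℝ)
    (hp : ∀ m, 0 ≤ p m) (hk : ∀ m, k m ∈ Set.Icc (-1 : ℝ) 1)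
    (hn : ∀ m, ∑ i, n m i ^ 2 = 1)
    (hpsum : ∑ m, p m = 1) (hpkn : ∀ i, ∑ m, p m * k m * n m i = 0)
    (M : ι → Matrix (Fin 2) (Fin 2) ℂ)
    (hMdef : ∀ m, M m = (p m : ℂ) • (1 + (k m : ℂ) • vecσ (n m))) :
    noise M basisZ = ∑ m, p m * hFun |k m * (∑ i, n m i * (![0, 0, 1] : Fin 3 → ℝ) i)| := by
  unfold noise
  rw [neg_eq_iff_eq_neg, ← Finset.sum_neg_distrib]
  apply Finset.sum_congr rfl
  intro m _
  rw [hMdef m]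
  have hz : (∑ i, n m i * (![0, 0, 1] : Fin 3 → ℝ) i) = n m 2 := by
    simp [Fin.sum_univ_three]
  rw [hz, hFun_abs]
  rw [Fin.sum_univ_two, qform_Z0, qform_Z1, trace_re_M]
  rw [← perM (p m) (k m * n m 2) (hp m)]
  norm_num
end

section
/- Let (M_m)_m be a POVM on ℂ² with elements M_m = p_m·(I + k_m·(n_m·σ)), where p_m ≥ 0, k_m ∈ [−1,1], n_m ∈ ℝ³ unit vectors, Σ_m p_m = 1 and Σ_m p_m k_m n_m = 0. Let √M_m denote the positive semidefinite square root of M_m, let x̂ = (1,0,0), and let ρ_± = (1/2)·(I ± x̂·σ). Then Σ_m √M_m ρ_± √M_m = (1/2)·(I + r_±·σ), where r_± = ±Σ_m p_m·[(n_m·x̂)·n_m + √(1 − k_m²)·(x̂ − (n_m·x̂)·n_m)]. -/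
open Matrix
open scoped ComplexOrder

noncomputable section

/-- The positive semidefinite square root of a positive semidefinite matrix
(the former Mathlib `Matrix.PosSemidef.sqrt`, spelled out). -/
def Matrix.PosSemidef.sqrt {n : Type*} [Fintype n] [DecidableEq n] {A : Matrix n n ℂ}
    (hA : A.PosSemidef) : Matrix n n ℂ :=
  (hA.1.eigenvectorUnitary : Matrix n n ℂ) * diagonal ((↑) ∘ Real.sqrt ∘ hA.1.eigenvalues) *
    (star hA.1.eigenvectorUnitary : Matrix n n ℂ)

end

/-!
`n·σ` is a Hermitian involution, so `p(1 + k n·σ)` has the square root `u + w n·σ` with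
`u, w = (√(p(1+k)) ± √(p(1-k)))/2`. Sandwiching `a·σ` between two copies of `u + w n·σ` only
needs the anticommutator `{a·σ, n·σ} = 2(n·a)`, which gives the Bloch vector contributed by each
POVM element; on summing, the terms `p k n` cancel because `Σ p k n = 0`.
-/

open scoped MatrixOrder in
theorem Matrix.PosSemidef.sqrt_eq_of_mul_self {n : Type*} [Fintype n] [DecidableEq n]
    {A S : Matrix n n ℂ} (hA : A.PosSemidef) (hS : S.PosSemidef) (h : S * S = A) :
    hA.sqrt = S := by
  have hsqrt : hA.sqrt = CFC.sqrt A := by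
    rw [CFC.sqrt_eq_cfc, cfc_nnreal_eq_real _ A, hA.1.cfc_eq]
    simp only [IsHermitian.cfc, Matrix.PosSemidef.sqrt, Unitary.conjStarAlgAut_apply,
      Real.coe_sqrt, Real.coe_toNNReal']
    congr 3
    funext i
    simp [hA.eigenvalues_nonneg i]
  rw [hsqrt]
  exact CFC.sqrt_unique h hS.nonneg

section Involution

variable {R A : Type*} [CommRing R] [Ring A] [Algebra R A] {N : A}

theorem smul_one_add_smul_mul_smul_one_add_smul (hN : N * N = 1) (x y x' y' : R) :
    (x • 1 + y • N) * (x' • 1 + y' • N) = (x * x' + y * y') • 1 + (x * y' + y * x') • N := by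
  simp only [add_mul, mul_add, smul_mul_assoc, mul_smul_comm, one_mul, mul_one, hN]
  module

theorem smul_one_add_smul_mul_mul_smul_one_add_smul (hN : N * N = 1) {X : A} {c : R}
    (hXN : X * N + N * X = c • 1) (u w : R) :
    (u • 1 + w • N) * X * (u • 1 + w • N)
      = (u * w * c) • 1 + (u ^ 2 - w ^ 2) • X + (w ^ 2 * c) • N := by
  have hNX : N * X = c • 1 - X * N := eq_sub_of_add_eq' hXN
  have hNXN : N * X * N = c • N - X := by
    rw [hNX, sub_mul, smul_mul_assoc, one_mul, mul_assoc, hN, mul_one]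
  calc (u • 1 + w • N) * X * (u • 1 + w • N)
      = (u * u) • X + (u * w) • (X * N) + (w * u) • (N * X) + (w * w) • (N * X * N) := by
        simp only [add_mul, mul_add, smul_mul_assoc, mul_smul_comm, one_mul, mul_one, mul_assoc]
        module
    _ = _ := by rw [hNXN, hNX]; module

end Involution

theorem posSemidef_smul_one_add_smul_of_involution {n : Type*} [Fintype n] [DecidableEq n]
    {N : Matrix n n ℂ} (hN : N * N = 1) (hNh : N.IsHermitian) {s t : ℝ} (hs : 0 ≤ s)
    (ht : 0 ≤ t) :
    ((((s + t) / 2 : ℝ) : ℂ) • 1 + (((s - t) / 2 : ℝ) : ℂ) • N).PosSemidef := by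
  set R : Matrix n n ℂ :=
    (((√s + √t) / 2 : ℝ) : ℂ) • 1 + (((√s - √t) / 2 : ℝ) : ℂ) • N
  have hR : Rᴴ = R := by simp [R, conjTranspose_smul, hNh.eq, Complex.conj_ofReal]
  have hRR : R * R = (((s + t) / 2 : ℝ) : ℂ) • 1 + (((s - t) / 2 : ℝ) : ℂ) • N := by
    rw [smul_one_add_smul_mul_smul_one_add_smul hN]
    have hs' : ((√s : ℝ) : ℂ) * √s = s := by exact_mod_cast Real.mul_self_sqrt hs
    have ht' : ((√t : ℝ) : ℂ) * √t = t := by exact_mod_cast Real.mul_self_sqrt ht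
    match_scalars
    · linear_combination hs' / 2 + ht' / 2
    · linear_combination hs' / 2 - ht' / 2
  rw [← hRR]
  nth_rw 1 [← hR]
  exact posSemidef_conjTranspose_mul_self R

theorem vecσ_add (v w : Fin 3 → ℝ) : vecσ (v + w) = vecσ v + vecσ w := by
  simp only [vecσ, Pi.add_apply]; push_cast; module

theorem vecσ_sub (v w : Fin 3 → ℝ) : vecσ (v - w) = vecσ v - vecσ w := by
  simp only [vecσ, Pi.sub_apply]; push_cast; module

theorem vecσ_smul (c : ℝ) (v : Fin 3 → ℝ) : vecσ (c • v) = (c : ℂ) • vecσ v := by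
  simp only [vecσ, Pi.smul_apply, smul_eq_mul]; push_cast; module

theorem vecσ_neg (v : Fin 3 → ℝ) : vecσ (-v) = -vecσ v := by
  simpa using vecσ_smul (-1) v

theorem vecσ_sum {ι : Type*} (s : Finset ι) (f : ι → Fin 3 → ℝ) :
    vecσ (∑ m ∈ s, f m) = ∑ m ∈ s, vecσ (f m) :=
  map_sum (AddMonoidHom.mk' vecσ vecσ_add) f s

theorem vecσ_unitX : vecσ ![1, 0, 0] = σx := by
  simp [vecσ]

theorem vecσ_isHermitian (v : Fin 3 → ℝ) : (vecσ v).IsHermitian := by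
  ext i j
  fin_cases i <;> fin_cases j <;> simp [vecσ, σx, σy, σz, conjTranspose_apply]

theorem vecσ_mul_add_mul_swap (v w : Fin 3 → ℝ) :
    vecσ v * vecσ w + vecσ w * vecσ v = ((2 * (v ⬝ᵥ w) : ℝ) : ℂ) • 1 := by
  ext i j
  fin_cases i <;> fin_cases j <;>
    simp [vecσ, σx, σy, σz, dotProduct, Fin.sum_univ_three, one_apply] <;>
    ring_nf <;> simp [Complex.I_sq]

theorem vecσ_mul_self {v : Fin 3 → ℝ} (hv : ∑ i, v i ^ 2 = 1) : vecσ v * vecσ v = 1 := by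
  have hv' : (v 0 : ℂ) ^ 2 + (v 1 : ℂ) ^ 2 + (v 2 : ℂ) ^ 2 = 1 := by
    rw [Fin.sum_univ_three] at hv; exact_mod_cast hv
  ext i j
  fin_cases i <;> fin_cases j <;>
    simp [vecσ, σx, σy, σz, one_apply] <;>
    ring_nf <;> simp [Complex.I_sq] <;> linear_combination hv'

/-- The Bloch-vector part contributed by the POVM element `p(1 + k n·σ)` to the Lüders
post-measurement state of `½(1 + a·σ)`. -/
noncomputable def luedersBlochVec (p k : ℝ) (n a : Fin 3 → ℝ) : Fin 3 → ℝ :=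
  p • ((n ⬝ᵥ a) • n + √(1 - k ^ 2) • (a - (n ⬝ᵥ a) • n))

theorem luedersBlochVec_neg (p k : ℝ) (n a : Fin 3 → ℝ) :
    luedersBlochVec p k n (-a) = -luedersBlochVec p k n a := by
  simp only [luedersBlochVec, dotProduct_neg, neg_smul]
  module

theorem sqrt_eq_of_eq_smul_one_add_smul_vecσ {p k : ℝ} {n : Fin 3 → ℝ} (hp : 0 ≤ p)
    (hk : k ∈ Set.Icc (-1 : ℝ) 1) (hn : ∑ i, n i ^ 2 = 1) {M : Matrix (Fin 2) (Fin 2) ℂ}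
    (hM : M = (p : ℂ) • (1 + (k : ℂ) • vecσ n)) (hpsd : M.PosSemidef) :
    hpsd.sqrt = (((√(p * (1 + k)) + √(p * (1 - k))) / 2 : ℝ) : ℂ) • 1
      + (((√(p * (1 + k)) - √(p * (1 - k))) / 2 : ℝ) : ℂ) • vecσ n := by
  obtain ⟨hk₁, hk₂⟩ := hk
  have hN : vecσ n * vecσ n = 1 := vecσ_mul_self hn
  refine hpsd.sqrt_eq_of_mul_self (posSemidef_smul_one_add_smul_of_involution hN
    (vecσ_isHermitian n) (Real.sqrt_nonneg _) (Real.sqrt_nonneg _)) ?_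
  rw [smul_one_add_smul_mul_smul_one_add_smul hN, hM]
  have hs : (√(p * (1 + k)) : ℂ) ^ 2 = ((p * (1 + k) : ℝ) : ℂ) := by
    exact_mod_cast Real.sq_sqrt (by nlinarith)
  have ht : (√(p * (1 - k)) : ℂ) ^ 2 = ((p * (1 - k) : ℝ) : ℂ) := by
    exact_mod_cast Real.sq_sqrt (by nlinarith)
  push_cast at hs ht
  match_scalars
  · linear_combination hs / 2 + ht / 2
  · linear_combination hs / 2 - ht / 2

theorem sqrt_mul_bloch_mul_sqrt {p k : ℝ} {n : Fin 3 → ℝ} (hp : 0 ≤ p)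
    (hk : k ∈ Set.Icc (-1 : ℝ) 1) (hn : ∑ i, n i ^ 2 = 1) {M : Matrix (Fin 2) (Fin 2) ℂ}
    (hM : M = (p : ℂ) • (1 + (k : ℂ) • vecσ n)) (hpsd : M.PosSemidef) (a : Fin 3 → ℝ) :
    hpsd.sqrt * ((1 / 2 : ℂ) • (1 + vecσ a)) * hpsd.sqrt
      = (1 / 2 : ℂ) • (((p + p * k * (n ⬝ᵥ a) : ℝ) : ℂ) • 1
          + vecσ ((p * k) • n + luedersBlochVec p k n a)) := by
  have hS := sqrt_eq_of_eq_smul_one_add_smul_vecσ hp hk hn hM hpsd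
  obtain ⟨hk₁, hk₂⟩ := hk
  set s := √(p * (1 + k))
  set t := √(p * (1 - k))
  have hs : (s : ℂ) ^ 2 = ((p * (1 + k) : ℝ) : ℂ) := by exact_mod_cast Real.sq_sqrt (by nlinarith)
  have ht : (t : ℂ) ^ 2 = ((p * (1 - k) : ℝ) : ℂ) := by exact_mod_cast Real.sq_sqrt (by nlinarith)
  have hst : (s : ℂ) * t = ((p * √(1 - k ^ 2) : ℝ) : ℂ) := by
    rw [← Complex.ofReal_mul, ← Real.sqrt_mul (by nlinarith),
      show p * (1 + k) * (p * (1 - k)) = p ^ 2 * (1 - k ^ 2) by ring,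
      Real.sqrt_mul (sq_nonneg p), Real.sqrt_sq hp]
  have hN : vecσ n * vecσ n = 1 := vecσ_mul_self hn
  have hanti : vecσ a * vecσ n + vecσ n * vecσ a = ((2 * (n ⬝ᵥ a) : ℝ) : ℂ) • 1 := by
    rw [vecσ_mul_add_mul_swap, dotProduct_comm]
  calc hpsd.sqrt * ((1 / 2 : ℂ) • (1 + vecσ a)) * hpsd.sqrt
      = (1 / 2 : ℂ) • (hpsd.sqrt * hpsd.sqrt + hpsd.sqrt * vecσ a * hpsd.sqrt) := by
        rw [mul_smul_comm, smul_mul_assoc, mul_add, add_mul, mul_one]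
    _ = _ := by
      rw [hS, smul_one_add_smul_mul_smul_one_add_smul hN,
        smul_one_add_smul_mul_mul_smul_one_add_smul hN hanti]
      simp only [luedersBlochVec, vecσ_add, vecσ_sub, vecσ_smul]
      push_cast at hs ht hst ⊢
      match_scalars
      · linear_combination (hs + ht) / 4 + ((n ⬝ᵥ a : ℝ) : ℂ) / 4 * (hs - ht)
      · linear_combination (hs - ht) / 4 + ((n ⬝ᵥ a : ℝ) : ℂ) / 4 * (hs + ht - 2 * hst)
      · linear_combination hst / 2

theorem sum_sqrt_mul_bloch_mul_sqrt {ι : Type*} [Fintype ι] {p k : ι → ℝ} {n : ι → Fin 3 → ℝ}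
    (hp : ∀ m, 0 ≤ p m) (hk : ∀ m, k m ∈ Set.Icc (-1 : ℝ) 1) (hn : ∀ m, ∑ i, n m i ^ 2 = 1)
    (hpsum : ∑ m, p m = 1) (hpkn : ∀ i, ∑ m, p m * k m * n m i = 0)
    {M : ι → Matrix (Fin 2) (Fin 2) ℂ} (hMdef : ∀ m, M m = (p m : ℂ) • (1 + (k m : ℂ) • vecσ (n m)))
    (hPSD : ∀ m, (M m).PosSemidef) (a : Fin 3 → ℝ) :
    ∑ m, (hPSD m).sqrt * ((1 / 2 : ℂ) • (1 + vecσ a)) * (hPSD m).sqrt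
      = (1 / 2 : ℂ) • (1 + vecσ (∑ m, luedersBlochVec (p m) (k m) (n m) a)) := by
  have hpkn' : ∑ m, (p m * k m) • n m = 0 := by
    ext i
    simpa [Finset.sum_apply] using hpkn i
  have hpkna : ∑ m, p m * k m * (n m ⬝ᵥ a) = 0 := by
    rw [← zero_dotProduct a, ← hpkn', sum_dotProduct]
    simp only [smul_dotProduct, smul_eq_mul]
  calc ∑ m, (hPSD m).sqrt * ((1 / 2 : ℂ) • (1 + vecσ a)) * (hPSD m).sqrt
      = ∑ m, (1 / 2 : ℂ) • (((p m + p m * k m * (n m ⬝ᵥ a) : ℝ) : ℂ) • 1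
          + vecσ ((p m * k m) • n m + luedersBlochVec (p m) (k m) (n m) a)) :=
        Finset.sum_congr rfl fun m _ =>
          sqrt_mul_bloch_mul_sqrt (hp m) (hk m) (hn m) (hMdef m) (hPSD m) a
    _ = (1 / 2 : ℂ) • (((∑ m, p m + ∑ m, p m * k m * (n m ⬝ᵥ a) : ℝ) : ℂ) • 1
          + vecσ (∑ m, (p m * k m) • n m + ∑ m, luedersBlochVec (p m) (k m) (n m) a)) := by
        rw [← Finset.smul_sum, Finset.sum_add_distrib, ← Finset.sum_smul, ← vecσ_sum,
          ← Complex.ofReal_sum, Finset.sum_add_distrib, Finset.sum_add_distrib]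
    _ = _ := by rw [hpsum, hpkna, hpkn', add_zero, zero_add, Complex.ofReal_one, one_smul]

/-- For a POVM with elements `M_m = p_m·(I + k_m·(n_m·σ))` and `ρ_± = (1/2)(I ± x̂·σ)`, the
Lüders post-measurement states satisfy `Σ_m √M_m ρ_± √M_m = (1/2)(I + r_±·σ)` with
`r_± = ±Σ_m p_m·[(n_m·x̂)n_m + √(1−k_m²)(x̂ − (n_m·x̂)n_m)]`. -/
theorem stmt_12 {ι : Type*} [Fintype ι] (p k : ι → ℝ) (n : ι → Fin 3 → ℝ)
    (hp : ∀ m, 0 ≤ p m) (hk : ∀ m, k m ∈ Set.Icc (-1 : ℝ) 1)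
    (hn : ∀ m, ∑ i, n m i ^ 2 = 1)
    (hpsum : ∑ m, p m = 1) (hpkn : ∀ i, ∑ m, p m * k m * n m i = 0)
    (M : ι → Matrix (Fin 2) (Fin 2) ℂ)
    (hMdef : ∀ m, M m = (p m : ℂ) • (1 + (k m : ℂ) • vecσ (n m)))
    (hPSD : ∀ m, (M m).PosSemidef)
    (r : Fin 3 → ℝ)
    (hr : r = ∑ m, p m • ((∑ i, n m i * (![1, 0, 0] : Fin 3 → ℝ) i) • n m +
        Real.sqrt (1 - k m ^ 2) •
          ((![1, 0, 0] : Fin 3 → ℝ) - (∑ i, n m i * (![1, 0, 0] : Fin 3 → ℝ) i) • n m))) :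
    (∑ m, (hPSD m).sqrt * ((1 / 2 : ℂ) • (1 + σx)) * (hPSD m).sqrt
        = (1 / 2 : ℂ) • (1 + vecσ r)) ∧
    (∑ m, (hPSD m).sqrt * ((1 / 2 : ℂ) • (1 - σx)) * (hPSD m).sqrt
        = (1 / 2 : ℂ) • (1 + vecσ (-r))) := by
  have hr' : r = ∑ m, luedersBlochVec (p m) (k m) (n m) ![1, 0, 0] := hr
  have hσx : 1 - σx = 1 + vecσ (-![1, 0, 0]) := by rw [vecσ_neg, vecσ_unitX, sub_eq_add_neg]
  have hnegr : -r = ∑ m, luedersBlochVec (p m) (k m) (n m) (-![1, 0, 0]) := by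
    simp only [hr', luedersBlochVec_neg, Finset.sum_neg_distrib]
  constructor
  · rw [← vecσ_unitX, hr']
    exact sum_sqrt_mul_bloch_mul_sqrt hp hk hn hpsum hpkn hMdef hPSD _
  · rw [hσx, hnegr]
    exact sum_sqrt_mul_bloch_mul_sqrt hp hk hn hpsum hpkn hMdef hPSD _
end

section
/- For θ ∈ [0, π/2], let M^θ = {M^θ_{−1}, M^θ_0, M^θ_1} be the three-outcome POVM on ℂ² with M^θ_m = p_m·(I + n_m·σ), where n_m = ((−1)^m·cos(mθ), 0, sin(mθ)), p_0 = cos θ/(1 + cos θ) and p_{−1} = p_1 = 1/(2(1 + cos θ)). Then M^θ is a valid POVM and its noise with respect to the Pauli observable σ_z equals N(M^θ, σ_z) = (cos θ + h(sin θ))/(1 + cos θ). -/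
open Matrix
open scoped ComplexOrder

/-!
Each `M^θ_m = p_m (I + n_m·σ)` has a unit Bloch vector `n_m`, so it is positive semidefinite, and
`Σ p_m = 1`, `Σ p_m n_m = 0` give `Σ M^θ_m = I`. In the eigenbasis of `σ_z` the outcome `m`
leaves the conditional distribution `((1 ± n_{m,z})/2)`, so the noise is `Σ p_m h(n_{m,z})`,
which for `n_{m,z} = sin(mθ)` is `2 p_1 h(sin θ) + p_0 h(0)`.
-/

noncomputable section

lemma hFun_neg (x : ℝ) : hFun (-x) = hFun x := by
  rw [hFun, hFun, sub_neg_eq_add, ← sub_eq_add_neg]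
  ring

lemma hFun_zero : hFun 0 = 1 := by
  have logb_half : Real.logb 2 (1 / 2) = -1 := by
    rw [one_div, Real.logb_inv, Real.logb_self_eq_one one_lt_two]
  norm_num [hFun, logb_half]

lemma one_add_vecσ (v : Fin 3 → ℝ) :
    1 + vecσ v = !![1 + (v 2 : ℂ), v 0 - v 1 * Complex.I; v 0 + v 1 * Complex.I, 1 - v 2] := by
  ext i j
  fin_cases i <;> fin_cases j <;> simp [vecσ, σx, σy, σz] <;> ring

lemma posSemidef_one_add_vecσ {v : Fin 3 → ℝ} (hv : ∑ i, v i ^ 2 ≤ 1) :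
    (1 + vecσ v).PosSemidef := by
  rw [Fin.sum_univ_three] at hv
  rw [one_add_vecσ, posSemidef_iff_dotProduct_mulVec]
  refine ⟨?_, fun u => ?_⟩
  · ext i j
    fin_cases i <;> fin_cases j <;> simp [Matrix.conjTranspose_apply]; ring
  · simp only [dotProduct, mulVec, Fin.sum_univ_two, Matrix.of_apply, Matrix.cons_val',
      Matrix.cons_val_zero, Matrix.cons_val_one, Matrix.empty_val', Matrix.cons_val_fin_one]
    rw [Complex.nonneg_iff]
    simp only [Complex.add_re, Complex.add_im, Complex.mul_re, Complex.mul_im, Complex.sub_re,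
      Complex.sub_im, Complex.ofReal_re, Complex.ofReal_im, Complex.one_re, Complex.one_im,
      Complex.I_re, Complex.I_im, Pi.star_apply, Complex.star_def, Complex.conj_re,
      Complex.conj_im]
    generalize (u 0).re = a, (u 0).im = b, (u 1).re = c, (u 1).im = d
    constructor
    -- With `w = v₀ + i v₁`: `2⟨u|1 + v·σ|u⟩ = |(1 + v₂) u₀ + w̄ u₁|² + |(1 - v₂) u₁ + w u₀|²`
    -- `+ (1 - |v|²) ‖u‖²`.
    · nlinarith [sq_nonneg ((1 + v 2) * a + v 0 * c + v 1 * d),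
        sq_nonneg ((1 + v 2) * b + v 0 * d - v 1 * c),
        sq_nonneg ((1 - v 2) * c + v 0 * a - v 1 * b),
        sq_nonneg ((1 - v 2) * d + v 0 * b + v 1 * a),
        mul_nonneg (sub_nonneg.2 hv) (by positivity : 0 ≤ a ^ 2 + b ^ 2 + c ^ 2 + d ^ 2)]
    · ring

@[simps]
def vecσₗ : (Fin 3 → ℝ) →ₗ[ℝ] Matrix (Fin 2) (Fin 2) ℂ where
  toFun := vecσ
  map_add' v w := by
    simp only [vecσ, Pi.add_apply, Complex.ofReal_add, add_smul]
    abel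
  map_smul' r v := by
    simp only [vecσ, Pi.smul_apply, smul_eq_mul, Complex.ofReal_mul, mul_smul, Complex.coe_smul,
      RingHom.id_apply, smul_add]

section bloch

variable {ι : Type*} [Fintype ι]

lemma sum_smul_one_add_vecσ (p : ι → ℝ) (n : ι → Fin 3 → ℝ) :
    ∑ m, (p m : ℂ) • (1 + vecσ (n m)) = ((∑ m, p m : ℝ) : ℂ) • 1 + vecσ (∑ m, p m • n m) := by
  rw [← vecσₗ_apply, map_sum]
  simp [smul_add, Finset.sum_add_distrib, Finset.sum_smul, Complex.coe_smul]

lemma isPOVM_of_bloch {M : ι → Matrix (Fin 2) (Fin 2) ℂ}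
    {p : ι → ℝ} {n : ι → Fin 3 → ℝ} (hM : ∀ m, M m = (p m : ℂ) • (1 + vecσ (n m)))
    (hp : ∀ m, 0 ≤ p m) (hn : ∀ m, ∑ i, n m i ^ 2 ≤ 1) (hp_sum : ∑ m, p m = 1)
    (hpn_sum : ∑ m, p m • n m = 0) : IsPOVM M := by
  refine ⟨fun m => hM m ▸ (posSemidef_one_add_vecσ (hn m)).smul (by exact_mod_cast hp m), ?_⟩
  simp only [hM, sum_smul_one_add_vecσ, hp_sum, hpn_sum]
  simp [vecσ]

lemma qform_basisZ (A : Matrix (Fin 2) (Fin 2) ℂ) (a : Fin 2) :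
    qform A (basisZ a) = (A a a).re := by
  fin_cases a <;> simp [qform, basisZ, dotProduct, mulVec]

lemma noise_basisZ_of_bloch {M : ι → Matrix (Fin 2) (Fin 2) ℂ}
    {p : ι → ℝ} {n : ι → Fin 3 → ℝ} (hM : ∀ m, M m = (p m : ℂ) • (1 + vecσ (n m))) :
    noise M basisZ = ∑ m, p m * hFun (n m 2) := by
  unfold noise
  rw [← Finset.sum_neg_distrib]
  refine Finset.sum_congr rfl fun m _ => ?_
  simp only [hM, qform_basisZ, one_add_vecσ, Fin.sum_univ_two, trace_fin_two, Matrix.smul_apply,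
    of_apply, cons_val', cons_val_zero, cons_val_one, empty_val', cons_val_fin_one, smul_eq_mul,
    Complex.add_re, Complex.mul_re, Complex.ofReal_re, Complex.ofReal_im, Complex.one_re,
    Complex.sub_re, zero_mul, sub_zero, Nat.cast_ofNat]
  by_cases hp : p m = 0
  · simp [hp]
  · have hsum : 1 / 2 * (p m * (1 + n m 2) + p m * (1 - n m 2)) = p m := by ring
    have ratio (s : ℝ) : 1 / 2 * (p m * s) / p m = s / 2 := by field_simp
    rw [hsum, ratio, ratio, hFun]
    ring

end bloch

section family

variable (θ : ℝ)

/-- Outcome `m ∈ {-1, 0, 1}` of `M^θ` is indexed by `i : Fin 3` with `m = i - 1`. -/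
def weightθ (i : Fin 3) : ℝ :=
  if i = 1 then Real.cos θ / (1 + Real.cos θ) else 1 / (2 * (1 + Real.cos θ))

def blochθ (i : Fin 3) : Fin 3 → ℝ :=
  ![(-1 : ℝ) ^ ((i : ℤ) - 1) * Real.cos ((((i : ℤ) - 1 : ℤ) : ℝ) * θ), 0,
    Real.sin ((((i : ℤ) - 1 : ℤ) : ℝ) * θ)]

lemma blochθ_zero : blochθ θ 0 = ![-Real.cos θ, 0, -Real.sin θ] := by
  ext j; fin_cases j <;> simp [blochθ]

lemma blochθ_one : blochθ θ 1 = ![1, 0, 0] := by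
  ext j; fin_cases j <;> simp [blochθ]

lemma blochθ_two : blochθ θ 2 = ![-Real.cos θ, 0, Real.sin θ] := by
  ext j; fin_cases j <;> simp [blochθ]

lemma sum_sq_blochθ (i : Fin 3) : ∑ j, blochθ θ i j ^ 2 = 1 := by
  fin_cases i <;> simp [Fin.sum_univ_three, blochθ_zero, blochθ_one, blochθ_two]

lemma weightθ_nonneg (hcos : 0 ≤ Real.cos θ) (i : Fin 3) : 0 ≤ weightθ θ i := by
  unfold weightθ; split_ifs <;> positivity

lemma sum_weightθ (hcos : 1 + Real.cos θ ≠ 0) : ∑ i, weightθ θ i = 1 := by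
  simp only [Fin.sum_univ_three, weightθ, Fin.reduceEq, zero_ne_one, ↓reduceIte]
  field_simp
  ring

lemma sum_weightθ_smul_blochθ : ∑ i, weightθ θ i • blochθ θ i = 0 := by
  ext j
  fin_cases j <;> simp [Fin.sum_univ_three, weightθ, blochθ_zero, blochθ_one, blochθ_two]; ring

end family

end

/-- The three-outcome family `M^θ` (outcomes `m ∈ {−1,0,1}` encoded as `i ∈ Fin 3` with
`m = i − 1`), with `M^θ_m = p_m·(I + n_m·σ)`, `n_m = ((−1)^m·cos(mθ), 0, sin(mθ))`,
`p_0 = cos θ/(1 + cos θ)`, `p_{±1} = 1/(2(1 + cos θ))`, is a valid POVM, and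
`N(M^θ, σ_z) = (cos θ + h(sin θ))/(1 + cos θ)`. -/
theorem stmt_13 (θ : ℝ) (hθ : θ ∈ Set.Icc 0 (Real.pi / 2))
    (M : Fin 3 → Matrix (Fin 2) (Fin 2) ℂ)
    (hMdef : ∀ i : Fin 3, M i =
      ((if i = 1 then Real.cos θ / (1 + Real.cos θ)
        else 1 / (2 * (1 + Real.cos θ)) : ℝ) : ℂ) •
      (1 + vecσ ![(-1 : ℝ) ^ ((i : ℤ) - 1) * Real.cos ((((i : ℤ) - 1 : ℤ) : ℝ) * θ), 0,
                  Real.sin ((((i : ℤ) - 1 : ℤ) : ℝ) * θ)])) :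
    IsPOVM M ∧
    noise M basisZ = (Real.cos θ + hFun (Real.sin θ)) / (1 + Real.cos θ) := by
  have hM : ∀ i, M i = (weightθ θ i : ℂ) • (1 + vecσ (blochθ θ i)) := hMdef
  have hcos : 0 ≤ Real.cos θ :=
    Real.cos_nonneg_of_mem_Icc ⟨by linarith [hθ.1, Real.pi_pos], hθ.2⟩
  have hcos' : 1 + Real.cos θ ≠ 0 := by positivity
  refine ⟨isPOVM_of_bloch hM (weightθ_nonneg θ hcos) (fun i => (sum_sq_blochθ θ i).le)
    (sum_weightθ θ hcos') (sum_weightθ_smul_blochθ θ), ?_⟩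
  rw [noise_basisZ_of_bloch hM, Fin.sum_univ_three, blochθ_zero, blochθ_one, blochθ_two]
  simp only [weightθ, cons_val, hFun_neg, hFun_zero, Fin.reduceEq, zero_ne_one, ↓reduceIte]
  field_simp
  ring
end

section
/- For θ ∈ [0, π/2], let M^θ = {M^θ_{−1}, M^θ_0, M^θ_1} be the POVM on ℂ² with M^θ_m = p_m·(I + n_m·σ), n_m = ((−1)^m·cos(mθ), 0, sin(mθ)), p_0 = cos θ/(1 + cos θ), p_{−1} = p_1 = 1/(2(1 + cos θ)). Consider the measure-and-prepare instrument with correction that, on outcome 0, leaves the post-measurement state |n_0⟩⟨n_0| = (1/2)(I + σ_x) unchanged, and on outcomes ±1 outputs the state (1/2)(I − σ_x). Let |±x⟩ denote the eigenvectors of σ_x, and define the joint distribution p(b, b') for b, b' ∈ {+,−} by p(b, b') = (1/2)·[⟨bx|M^θ_0|bx⟩·𝟙(b'=+) + (⟨bx|M^θ_{−1}|bx⟩ + ⟨bx|M^θ_1|bx⟩)·𝟙(b'=−)]. Then the corrected disturbance D_E(M^θ, σ_x) = H(𝔹|𝔹') computed from p(b,b') equals h(cos θ)/(1 + cos θ).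 -/
open Matrix
open scoped ComplexOrder

/-!
The vectors `|±x⟩` only see the `σ_x`-component of a Bloch vector, so `⟨±x|M^θ_m|±x⟩` is
`p_m (1 ± (n_m)₁)`. Outcome `b' = +` then forces `b = +` and contributes no entropy, while the event
`b' = −` has probability `1/(1 + cos θ)` and, conditioned on it, `b` is distributed as
`((1 - cos θ)/2, (1 + cos θ)/2)`, whose entropy is `h(cos θ)`.
-/

lemma qform_smul_one_add_vecσ_basisX (c : ℝ) (v : Fin 3 → ℝ) (i : Fin 2) :
    qform ((c : ℂ) • (1 + vecσ v)) (basisX i) = c * (1 + if i = 0 then v 0 else -v 0) := by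
  fin_cases i <;>
  · simp [qform, vecσ, σx, σy, σz, basisX, Matrix.mulVec, dotProduct, Fin.sum_univ_two,
      Matrix.one_apply]
    ring_nf
    rw [Real.sq_sqrt zero_le_two]
    ring

lemma condEnt_eq_mul_hFun (p : Fin 2 → Fin 2 → ℝ) (q x : ℝ) (h10 : p 1 0 = 0)
    (h01 : p 0 1 = q * ((1 - x) / 2)) (h11 : p 1 1 = q * ((1 + x) / 2)) :
    condEnt p = q * hFun x := by
  have hcol0 : p 0 0 * Real.logb 2 (p 0 0 / (p 0 0 + p 1 0)) = 0 := by
    rcases eq_or_ne (p 0 0) 0 with h | h <;> simp [h, h10]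
  have hcol1 : p 0 1 + p 1 1 = q := by rw [h01, h11]; ring
  simp only [condEnt, Fin.sum_univ_two]
  rw [hcol0, hcol1, h10, h01, h11]
  rcases eq_or_ne q 0 with rfl | hq
  · simp
  rw [mul_div_cancel_left₀ _ hq, mul_div_cancel_left₀ _ hq, hFun]
  ring

theorem stmt_14_general (θ : ℝ)
    (M : Fin 3 → Matrix (Fin 2) (Fin 2) ℂ)
    (hMdef : ∀ i : Fin 3, M i =
      ((if i = 1 then Real.cos θ / (1 + Real.cos θ)
        else 1 / (2 * (1 + Real.cos θ)) : ℝ) : ℂ) •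
      (1 + vecσ ![(-1 : ℝ) ^ ((i : ℤ) - 1) * Real.cos ((((i : ℤ) - 1 : ℤ) : ℝ) * θ), 0,
                  Real.sin ((((i : ℤ) - 1 : ℤ) : ℝ) * θ)]))
    (pjoint : Fin 2 → Fin 2 → ℝ)
    (hpjoint : ∀ b b' : Fin 2, pjoint b b' = (1 / 2 : ℝ) *
      (qform (M 1) (basisX b) * (if b' = 0 then 1 else 0) +
       (qform (M 0) (basisX b) + qform (M 2) (basisX b)) * (if b' = 1 then 1 else 0))) :
    condEnt pjoint = hFun (Real.cos θ) / (1 + Real.cos θ) := by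
  have hM1 : ∀ b, qform (M 1) (basisX b) =
      Real.cos θ / (1 + Real.cos θ) * (1 + if b = 0 then 1 else -1) := by
    intro b; rw [hMdef, qform_smul_one_add_vecσ_basisX]; norm_num
  have hM02 : ∀ b, qform (M 0) (basisX b) + qform (M 2) (basisX b) =
      1 / (1 + Real.cos θ) * (1 + if b = 0 then -Real.cos θ else Real.cos θ) := by
    intro b
    rw [hMdef, hMdef, qform_smul_one_add_vecσ_basisX, qform_smul_one_add_vecσ_basisX]
    norm_num [Real.cos_neg, show (2 : Fin 3) ≠ 1 by decide]
    ring
  rw [condEnt_eq_mul_hFun pjoint (1 / (1 + Real.cos θ)) (Real.cos θ), one_div_mul_eq_div]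
  · simp [hpjoint, hM1]
  · simp [hpjoint, hM02]; ring
  · simp [hpjoint, hM02]; ring

/-- For the three-outcome POVM `M^θ` and the measure-and-prepare correction which keeps the
state `(1/2)(I+σ_x)` on outcome `0` and outputs `(1/2)(I−σ_x)` on outcomes `±1`, the joint
distribution `p(b,b') = (1/2)[⟨bx|M^θ_0|bx⟩·𝟙(b'=+) + (⟨bx|M^θ_{−1}|bx⟩+⟨bx|M^θ_1|bx⟩)·𝟙(b'=−)]`
gives corrected disturbance `D_E(M^θ,σ_x) = H(𝔹|𝔹') = h(cos θ)/(1 + cos θ)`. -/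
theorem stmt_14 (θ : ℝ) (hθ : θ ∈ Set.Icc 0 (Real.pi / 2))
    (M : Fin 3 → Matrix (Fin 2) (Fin 2) ℂ)
    (hMdef : ∀ i : Fin 3, M i =
      ((if i = 1 then Real.cos θ / (1 + Real.cos θ)
        else 1 / (2 * (1 + Real.cos θ)) : ℝ) : ℂ) •
      (1 + vecσ ![(-1 : ℝ) ^ ((i : ℤ) - 1) * Real.cos ((((i : ℤ) - 1 : ℤ) : ℝ) * θ), 0,
                  Real.sin ((((i : ℤ) - 1 : ℤ) : ℝ) * θ)]))
    (pjoint : Fin 2 → Fin 2 → ℝ)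
    (hpjoint : ∀ b b' : Fin 2, pjoint b b' = (1 / 2 : ℝ) *
      (qform (M 1) (basisX b) * (if b' = 0 then 1 else 0) +
       (qform (M 0) (basisX b) + qform (M 2) (basisX b)) * (if b' = 1 then 1 else 0))) :
    condEnt pjoint = hFun (Real.cos θ) / (1 + Real.cos θ) :=
  stmt_14_general θ M hMdef pjoint hpjoint
end
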